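/- arXiv:1908.06563 — 2 statements merged into one kernel-verified Lean document; each statement's English description precedes it below -/
import Mathlib

section
/- Let G be a finite simplicial complex and take the topological energy h(x) = ω(x) = (−1)^(|x|−1). Then Σ_{x,y∈G} g(x,y) = χ(G), where g(x,y) = ω(x)ω(y) Σ_{u∈G, x⊆u, y⊆u} ω(u) and χ(G) = Σ_{x∈G} (−1)^(|x|−1) is the Euler characteristic. -/
/-!
Expanding the Green sum and summing over the simplex `u` last gives
`∑ u, (∑ x ⊆ u, ω x)² ω u`. In a simplicial complex the faces of `u` are exactly its nonempty
subsets, whose alternating sum `∑ (-1)^(|x|-1)` is `1` because the full alternating sum over the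
powerset vanishes; so each term is `ω u`.
-/

open Finset

variable {α R : Type*} [DecidableEq α]

theorem Finset.sum_powerset_filter_nonempty_neg_one_pow_card_sub_one [Ring R] {s : Finset α}
    (hs : s.Nonempty) : ∑ x ∈ s.powerset with x.Nonempty, (-1 : R) ^ (#x - 1) = 1 := by
  have h_alt : ∑ x ∈ s.powerset, (-1 : R) ^ #x = 0 := by
    simpa using congrArg (Int.cast : ℤ → R) (sum_powerset_neg_one_pow_card_of_nonempty hs)
  rw [← sum_filter_not_add_sum_filter _ Finset.Nonempty] at h_alt
  simp only [not_nonempty_iff_eq_empty, filter_eq', empty_mem_powerset, if_true, sum_singleton,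
    card_empty, pow_zero] at h_alt
  have h_sign : ∀ x ∈ {x ∈ s.powerset | x.Nonempty}, (-1 : R) ^ (#x - 1) = -(-1) ^ #x := by
    intro x hx
    rw [← pow_sub_one_mul (card_ne_zero.2 (mem_filter.1 hx).2), mul_neg_one, neg_neg]
  rw [sum_congr rfl h_sign, sum_neg_distrib]
  exact neg_eq_of_add_eq_zero_left h_alt

theorem Finset.sum_sum_mul_mul_sum_filter_subset_subset [CommSemiring R] (G : Finset (Finset α))
    (f : Finset α → R) :
    ∑ x ∈ G, ∑ y ∈ G, f x * f y * ∑ u ∈ G with x ⊆ u ∧ y ⊆ u, f u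
      = ∑ u ∈ G, (∑ x ∈ G with x ⊆ u, f x) ^ 2 * f u := by
  calc _ = ∑ x ∈ G, ∑ y ∈ G, ∑ u ∈ G, if x ⊆ u ∧ y ⊆ u then f x * f y * f u else 0 := by
        simp_rw [mul_sum, sum_filter]
    _ = ∑ u ∈ G, ∑ x ∈ G, ∑ y ∈ G, if x ⊆ u ∧ y ⊆ u then f x * f y * f u else 0 :=
        (sum_congr rfl fun _ _ => sum_comm).trans sum_comm
    _ = _ := by
      simp_rw [sq, sum_mul_sum, sum_mul, sum_filter]
      refine sum_congr rfl fun u _ => sum_congr rfl fun x _ => ?_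
      by_cases hxu : x ⊆ u <;> simp [hxu]

theorem filter_subset_eq_powerset_filter_nonempty {G : Finset (Finset α)}
    (hne : ∀ x ∈ G, x.Nonempty) (hclosed : ∀ x ∈ G, ∀ y ⊆ x, y.Nonempty → y ∈ G)
    {u : Finset α} (hu : u ∈ G) : {x ∈ G | x ⊆ u} = {x ∈ u.powerset | x.Nonempty} := by
  ext x
  simp only [mem_filter, mem_powerset]
  exact ⟨fun ⟨hx, hxu⟩ => ⟨hxu, hne x hx⟩, fun ⟨hxu, hx⟩ => ⟨hclosed u hu x hxu hx, hxu⟩⟩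

theorem stmt_14 (G : Finset (Finset ℕ)) (hne : ∀ x ∈ G, x.Nonempty)
    (hclosed : ∀ x ∈ G, ∀ y ⊆ x, y.Nonempty → y ∈ G)
    (ω : Finset ℕ → ℝ) (hω : ∀ u, ω u = (-1 : ℝ) ^ (u.card - 1)) :
    (∑ x ∈ G, ∑ y ∈ G, ω x * ω y * ∑ u ∈ G.filter (fun u => x ⊆ u ∧ y ⊆ u), ω u)
      = ∑ x ∈ G, ω x := by
  rw [sum_sum_mul_mul_sum_filter_subset_subset]
  refine sum_congr rfl fun u hu => ?_
  have h_faces : ∑ x ∈ G with x ⊆ u, ω x = 1 := by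
    rw [filter_subset_eq_powerset_filter_nonempty hne hclosed hu, sum_congr rfl fun x _ => hω x]
    exact sum_powerset_filter_nonempty_neg_one_pow_card_sub_one (hne u hu)
  rw [h_faces, one_pow, one_mul]
end

section
/- Let G be a finite set of finite nonempty sets and t ≠ 0 a real number. Define L_t(x,y) = Σ_{u∈G, u⊆x, u⊆y} t^{|u|}. Then det(L_t) = Π_{x∈G} t^{|x|} = t^{Σ_{x∈G}|x|}. -/
/-!
With `ζ` the zeta matrix of `G` ordered by inclusion (`ζ u x = 1` iff `u ⊆ x`), the matrix is
`L_t = ζᵀ * diagonal (t ^ |·|) * ζ`. Ordering `G` compatibly with inclusion makes `ζ` unitriangular,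
so `det ζ = 1` and `det L_t = ∏ t ^ |x|`. This works for any weight `h` on any finite poset.
-/

open Finset Matrix

lemma strictMono_card_filter_lt {ι : Type*} [Fintype ι] [Preorder ι] [DecidableLT ι] :
    StrictMono fun i : ι => #{j | j < i} := by
  intro i j hij
  apply card_lt_card
  refine ⟨fun k hk => ?_, fun hsub => ?_⟩
  · simp only [mem_filter, mem_univ, true_and] at hk ⊢
    exact hk.trans hij
  · simpa using hsub (by simpa using hij : i ∈ _)

namespace Matrix

def zeta (ι R : Type*) [LE ι] [DecidableLE ι] [Zero R] [One R] : Matrix ι ι R :=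
  of fun i j => if i ≤ j then 1 else 0

variable {ι R : Type*} [PartialOrder ι] [DecidableLE ι]

lemma blockTriangular_zeta [Zero R] [One R] {α : Type*} [Preorder α] {b : ι → α}
    (hb : Monotone b) : (zeta ι R).BlockTriangular b :=
  fun _ _ hji => if_neg fun hij => (hb hij).not_gt hji

variable [Fintype ι] [DecidableEq ι] [CommRing R]

lemma det_zeta : (zeta ι R).det = 1 := by
  classical
  have hb := strictMono_card_filter_lt (ι := ι)
  rw [(blockTriangular_zeta hb.monotone).det]
  refine prod_eq_one fun k _ => ?_
  suffices h : (zeta ι R).toSquareBlock _ k = 1 by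
    rw [h, det_one]
  ext i j
  -- within a block all elements have the same number of predecessors, so `≤` collapses to `=`
  have hij : i ≤ j ↔ i = j := ⟨fun h => h.eq_of_not_lt fun hlt =>
    (hb hlt).ne (i.2.trans j.2.symm), fun h => h ▸ le_rfl⟩
  simp [zeta, toSquareBlock_def, one_apply, hij, Subtype.ext_iff]

lemma of_sum_lowerBounds_eq (h : ι → R) :
    of (fun x y : ι => ∑ u with u ≤ x ∧ u ≤ y, h u) = (zeta ι R)ᵀ * diagonal h * zeta ι R := by
  ext x y
  rw [mul_apply, of_apply, sum_filter]
  simp only [mul_diagonal, transpose_apply, zeta, of_apply]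
  refine sum_congr rfl fun u _ => ?_
  split_ifs <;> simp_all

theorem det_of_sum_lowerBounds (h : ι → R) :
    (of fun x y : ι => ∑ u with u ≤ x ∧ u ≤ y, h u).det = ∏ u, h u := by
  rw [of_sum_lowerBounds_eq, det_mul, det_mul, det_transpose, det_zeta, det_diagonal, one_mul,
    mul_one]

end Matrix

theorem stmt_19_general (G : Finset (Finset ℕ))
    (t : ℝ)
    (L : Matrix {x // x ∈ G} {x // x ∈ G} ℝ)
    (hL : ∀ x y, L x y = ∑ u ∈ G.filter (fun u => u ⊆ x.1 ∧ u ⊆ y.1), t ^ u.card) :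
    L.det = ∏ x ∈ G, t ^ x.card ∧ L.det = t ^ (∑ x ∈ G, x.card) := by
  have hL' : L = of fun x y : G => ∑ u with u ≤ x ∧ u ≤ y, t ^ u.1.card := by
    ext x y
    rw [hL, of_apply, sum_filter, ← sum_coe_sort, sum_filter]
    rfl
  have hdet : L.det = ∏ x ∈ G, t ^ x.card := by
    rw [hL', det_of_sum_lowerBounds, prod_coe_sort G fun x => t ^ x.card]
  exact ⟨hdet, hdet.trans (prod_pow_eq_pow_sum G card t)⟩

theorem stmt_19 (G : Finset (Finset ℕ)) (hne : ∀ x ∈ G, x.Nonempty)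
    (t : ℝ) (ht : t ≠ 0)
    (L : Matrix {x // x ∈ G} {x // x ∈ G} ℝ)
    (hL : ∀ x y, L x y = ∑ u ∈ G.filter (fun u => u ⊆ x.1 ∧ u ⊆ y.1), t ^ u.card) :
    L.det = ∏ x ∈ G, t ^ x.card ∧ L.det = t ^ (∑ x ∈ G, x.card) :=
  stmt_19_general G t L hL
end
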